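/- arXiv:1712.01575 — 3 statements merged into one kernel-verified Lean document; each statement's English description precedes it below -/
import Mathlib

section
/- Let F: A → B be a Galois covering and F_λ the push-down functor. If ((M_i)_{i∈I}, (γ_{ij}: M_j → M_i)) is an inverse system of A-modules such that the family {M_i} is finitely supported (i.e., the union of the supports of all M_i is finite), then F_λ(lim← M_i) ≅ lim← F_λ(M_i). -/
/-!
Limits of `A`-modules are computed pointwise and `F_λ M (b) = ⊕_{a/b} M(a)`, so the claim is
that at each `b` the direct sum over the fibre commutes with the inverse limit. Joint
injectivity passes to direct sums coordinatewise. For existence, a compatible family in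
`⊕_{a/b} M_i(a)` lifts coordinatewise to a family in `∏_{a/b} L(a)`; since all `M_i` vanish
off a finite set of objects, truncating that family to this set changes none of its images,
so the truncation lies in `⊕_{a/b} L(a)`.
-/

open CategoryTheory

attribute [local instance] Classical.decEq

/-- The fibre of a functor `F` over an object `b` of the target category. -/
def Fib {A B : Type} [SmallCategory A] [SmallCategory B] (F : A ⥤ B) (b : B) : Type :=
  {a : A // F.obj a = b}

variable {k : Type} [Field k]
variable {A B : Type} [SmallCategory A] [SmallCategory B]
  [Preadditive A] [Preadditive B]
  [CategoryTheory.Linear k A] [CategoryTheory.Linear k B]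

/-- The canonical map `⊕_{a₂/b₂} A(a₁, a₂) → B(F a₁, b₂)` induced by a functor `F`,
sending a finitely supported family `(α_{a₂})` to `Σ_{a₂/b₂} F(α_{a₂})`. -/
noncomputable def Phi (F : A ⥤ B) [F.Additive] (a₁ : A) (b₂ : B) :
    (Π₀ a₂ : Fib F b₂, (a₁ ⟶ a₂.1)) →+ (F.obj a₁ ⟶ b₂) :=
  DFinsupp.sumAddHom fun a₂ =>
    { toFun := fun g => F.map g ≫ eqToHom a₂.2
      map_zero' := by simp
      map_add' := by intro g g'; simp [Preadditive.add_comp] }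

/-- The canonical map `⊕_{a₁/b₁} A(a₁, a₂) → B(b₁, F a₂)` induced by a functor `F`,
sending a finitely supported family `(α_{a₁})` to `Σ_{a₁/b₁} F(α_{a₁})`. -/
noncomputable def Psi (F : A ⥤ B) [F.Additive] (b₁ : B) (a₂ : A) :
    (Π₀ a₁ : Fib F b₁, (a₁.1 ⟶ a₂)) →+ (b₁ ⟶ F.obj a₂) :=
  DFinsupp.sumAddHom fun a₁ =>
    { toFun := fun g => eqToHom a₁.2.symm ≫ F.map g
      map_zero' := by simp
      map_add' := by intro g g'; simp }

/-- A `k`-linear functor `F : A ⥤ B` is a covering functor if, for all `b₁, b₂` and all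
`a₁` over `b₁` (resp. `a₂` over `b₂`), the canonical maps
`⊕_{a₂/b₂} A(a₁,a₂) → B(b₁,b₂)` and `⊕_{a₁/b₁} A(a₁,a₂) → B(b₁,b₂)` are bijective. -/
def IsCovering (F : A ⥤ B) [F.Additive] : Prop :=
  (∀ (a₁ : A) (b₂ : B), Function.Bijective (Phi F a₁ b₂)) ∧
  (∀ (b₁ : B) (a₂ : A), Function.Bijective (Psi F b₁ a₂))


/-- A (strict) action of a group `G` on the category `A`, exhibiting the functor
`F : A ⥤ B` as the Galois covering `A → A/G`: the action is `F`-invariant, free on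
objects, and transitive on the fibres of `F`. -/
structure GaloisAction (G : Type) [Group G] (F : A ⥤ B) [F.Additive] : Type where
  /-- the action of `g ∈ G` by an automorphism of `A` -/
  ρ : G → A ⥤ A
  map_one : ρ 1 = Functor.id A
  map_mul : ∀ g h : G, ρ (g * h) = ρ h ⋙ ρ g
  /-- the covering is `G`-invariant: `F ∘ g = F` -/
  invariant : ∀ g : G, ρ g ⋙ F = F
  /-- the action is free on objects -/
  free : ∀ (g : G) (a : A), (ρ g).obj a = a → g = 1
  /-- `G` acts transitively on the fibres of `F` -/
  trans : ∀ a a' : A, F.obj a = F.obj a' → ∃ g : G, (ρ g).obj a = a'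

/-- For a covering functor `F`, `liftFamily` is the unique family
`{β^{a₁}_{(a₂)} : a₁ ⟶ a₂ | a₂/b₂}` (almost all zero) with `β = Σ_{a₂/b₂} F(β^{a₁}_{(a₂)})`. -/
noncomputable def liftFamily (F : A ⥤ B) [F.Additive] (h : IsCovering F)
    {b₁ b₂ : B} (β : b₁ ⟶ b₂) (a₁ : Fib F b₁) :
    Π₀ a₂ : Fib F b₂, (a₁.1 ⟶ a₂.1) :=
  (Equiv.ofBijective _ (h.1 a₁.1 b₂)).symm (eqToHom a₁.2 ≫ β)

/-- For a covering functor `F`, `coliftFamily` is the unique family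
`{β^{(a₁)}_{a₂} : a₁ ⟶ a₂ | a₁/b₁}` (almost all zero) with `β = Σ_{a₁/b₁} F(β^{(a₁)}_{a₂})`. -/
noncomputable def coliftFamily (F : A ⥤ B) [F.Additive] (h : IsCovering F)
    {b₁ b₂ : B} (β : b₁ ⟶ b₂) (a₂ : Fib F b₂) :
    Π₀ a₁ : Fib F b₁, (a₁.1 ⟶ a₂.1) :=
  (Equiv.ofBijective _ (h.2 b₁ a₂.1)).symm (β ≫ eqToHom a₂.2.symm)

/-- The value `F_λM(b) = ⊕_{a/b} M(a)` of the push-down functor. -/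
abbrev FlObj (F : A ⥤ B) (M : A ⥤ AddCommGrpCat) (b : B) : Type :=
  Π₀ a : Fib F b, ↥(M.obj a.1)

/-- The action `F_λM(β) : ⊕_{a₁/b₁} M(a₁) → ⊕_{a₂/b₂} M(a₂)` of the push-down of `M`
on `β : b₁ ⟶ b₂`, given by `(m_{a₁}) ↦ (Σ_{a₁/b₁} M(β^{a₁}_{(a₂)})(m_{a₁}))`,
using the lifts of `β` with fixed domain. -/
noncomputable def FlMap (F : A ⥤ B) [F.Additive] (h : IsCovering F)
    (M : A ⥤ AddCommGrpCat) [M.Additive] {b₁ b₂ : B} (β : b₁ ⟶ b₂) :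
    FlObj F M b₁ →+ FlObj F M b₂ :=
  DFinsupp.sumAddHom fun a₁ =>
    { toFun := fun m =>
        DFinsupp.mapRange (fun a₂ g => M.map g m)
          (fun a₂ => by show M.map 0 m = 0; rw [Functor.map_zero]; rfl) (liftFamily F h β a₁)
      map_zero' := by ext a₂; simp
      map_add' := by intro m m'; ext a₂; simp }

/-- The value `F_ρM(b) = ∏_{a/b} M(a)` of the right adjoint to restriction. -/
abbrev FrObj (F : A ⥤ B) (M : A ⥤ AddCommGrpCat) (b : B) : Type :=
  (a : Fib F b) → ↥(M.obj a.1)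

/-- The action `F_ρM(β) : ∏_{a₁/b₁} M(a₁) → ∏_{a₂/b₂} M(a₂)`, given by
`(m_{a₁}) ↦ (Σ_{a₁/b₁} M(β^{(a₁)}_{a₂})(m_{a₁}))`, using the lifts of `β` with
fixed codomain. -/
noncomputable def FrMap (F : A ⥤ B) [F.Additive] (h : IsCovering F)
    (M : A ⥤ AddCommGrpCat) [M.Additive] {b₁ b₂ : B} (β : b₁ ⟶ b₂)
    (m : FrObj F M b₁) (a₂ : Fib F b₂) : ↥(M.obj a₂.1) :=
  DFinsupp.sumAddHom
    (fun a₁ : Fib F b₁ =>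
      AddMonoidHom.mk' (fun g : a₁.1 ⟶ a₂.1 => M.map g (m a₁))
        (fun g g' => by show M.map (g + g') (m a₁) = M.map g (m a₁) + M.map g' (m a₁); rw [Functor.map_add]; rfl))
    (coliftFamily F h β a₂)

/-- The push-down `F_λ f : F_λM → F_λN` of a morphism of `A`-modules `f : M → N`,
given pointwise by `(m_a)_{a/b} ↦ (f_a(m_a))_{a/b}`. -/
noncomputable def FlHom (F : A ⥤ B) {M N : A ⥤ AddCommGrpCat} (f : M ⟶ N) (b : B) :
    FlObj F M b →+ FlObj F N b :=
  DFinsupp.mapRange.addMonoidHom (fun a : Fib F b => ((f.app a.1).hom : ↥(M.obj a.1) →+ ↥(N.obj a.1)))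

section PushDown

omit [Preadditive A] [Preadditive B]

variable (F : A ⥤ B) {I : Type}

def familySupport (M : I → A ⥤ AddCommGrpCat) : Set A :=
  {a | ∃ i : I, ∃ m : ↥((M i).obj a), m ≠ 0}

@[simp]
lemma FlHom_apply {M N : A ⥤ AddCommGrpCat} (f : M ⟶ N) {b : B} (x : FlObj F M b)
    (a : Fib F b) : FlHom F f b x a = f.app a.1 (x a) :=
  rfl

lemma FlHom_jointly_injective {L : A ⥤ AddCommGrpCat} {M : I → A ⥤ AddCommGrpCat}
    (π : ∀ i, L ⟶ M i)
    (hπ : ∀ (a : A) (x y : ↥(L.obj a)), (∀ i, (π i).app a x = (π i).app a y) → x = y)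
    {b : B} {x y : FlObj F L b} (h : ∀ i, FlHom F (π i) b x = FlHom F (π i) b y) : x = y := by
  ext a
  exact hπ a.1 _ _ fun i => by simpa using DFunLike.congr_fun (h i) a

lemma exists_FlHom_eq_of_finite_support {L : A ⥤ AddCommGrpCat} {M : I → A ⥤ AddCommGrpCat}
    (π : ∀ i, L ⟶ M i) (hsupp : (familySupport M).Finite) {b : B}
    (s : ∀ i, FlObj F (M i) b) (x : ∀ a : Fib F b, ↥(L.obj a.1))
    (hx : ∀ i a, (π i).app a.1 (x a) = s i a) :
    ∃ y : FlObj F L b, ∀ i, FlHom F (π i) b y = s i := by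
  have hfib : {a : Fib F b | a.1 ∈ familySupport M}.Finite :=
    hsupp.preimage Subtype.val_injective.injOn
  refine ⟨DFinsupp.mk hfib.toFinset fun a => x a.1, fun i => ?_⟩
  ext a
  rw [FlHom_apply, DFinsupp.mk_apply]
  split_ifs with ha
  · exact hx i a
  · have hvanish : ∀ m : ↥((M i).obj a.1), m = 0 := fun m => by
      by_contra hm
      exact ha (hfib.mem_toFinset.mpr ⟨i, m, hm⟩)
    exact (hvanish _).trans (hvanish _).symm

end PushDown

theorem stmt_6_general (F : A ⥤ B)
    {I : Type} [Preorder I]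
    (M : I → A ⥤ AddCommGrpCat)
    -- the transition maps of the inverse system
    (γ : ∀ {i j : I}, i ≤ j → (M j ⟶ M i))
    -- the family (M_i) is finitely supported
    (hsupp : {a : A | ∃ i : I, ∃ m : ↥((M i).obj a), m ≠ 0}.Finite)
    -- L is the inverse limit of the system, computed pointwise
    (L : A ⥤ AddCommGrpCat) (π : ∀ i : I, L ⟶ M i)
    (hL_inj : ∀ (a : A) (x y : ↥(L.obj a)),
      (∀ i : I, (π i).app a x = (π i).app a y) → x = y)
    (hL_surj : ∀ (a : A) (s : ∀ i : I, ↥((M i).obj a)),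
      (∀ {i j : I} (hij : i ≤ j), (γ hij).app a (s j) = s i) →
        ∃ x : ↥(L.obj a), ∀ i : I, (π i).app a x = s i) :
    -- then F_λ L, with the projections F_λ π_i, is the inverse limit of (F_λ M_i):
    ∀ b : B,
      (∀ x y : FlObj F L b,
        (∀ i : I, FlHom F (π i) b x = FlHom F (π i) b y) → x = y) ∧
      (∀ s : ∀ i : I, FlObj F (M i) b,
        (∀ {i j : I} (hij : i ≤ j), FlHom F (γ hij) b (s j) = s i) →
          ∃ x : FlObj F L b, ∀ i : I, FlHom F (π i) b x = s i) := by
  intro b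
  refine ⟨fun _ _ => FlHom_jointly_injective F π hL_inj, fun s hs => ?_⟩
  choose x hx using fun a : Fib F b =>
    hL_surj a.1 (fun i => s i a) fun hij => by simpa using DFunLike.congr_fun (hs hij) a
  exact exists_FlHom_eq_of_finite_support F π hsupp s x fun i a => hx a i

/-- Let `F : A → B` be a Galois covering with push-down functor `F_λ`.
If `(M_i)_{i ∈ I}` is an inverse system of `A`-modules whose family is finitely supported,
and `L` (with projections `π_i`) is its inverse limit (computed pointwise), then
`F_λ L` is the inverse limit of the system `(F_λ M_i)`; that is,
`F_λ (lim← M_i) ≅ lim← F_λ(M_i)`. -/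
theorem stmt_6 {G : Type} [Group G] (F : A ⥤ B) [F.Additive]
    (hcov : IsCovering F) (ga : GaloisAction G F)
    {I : Type} [Preorder I]
    (M : I → A ⥤ AddCommGrpCat) [∀ i, (M i).Additive]
    -- the transition maps of the inverse system
    (γ : ∀ {i j : I}, i ≤ j → (M j ⟶ M i))
    (hγ_id : ∀ i : I, γ (le_refl i) = 𝟙 (M i))
    (hγ_comp : ∀ {i j l : I} (hij : i ≤ j) (hjl : j ≤ l),
      γ hjl ≫ γ hij = γ (hij.trans hjl))
    -- the family (M_i) is finitely supported
    (hsupp : {a : A | ∃ i : I, ∃ m : ↥((M i).obj a), m ≠ 0}.Finite)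
    -- L is the inverse limit of the system, computed pointwise
    (L : A ⥤ AddCommGrpCat) [L.Additive] (π : ∀ i : I, L ⟶ M i)
    (hπ : ∀ {i j : I} (hij : i ≤ j), π j ≫ γ hij = π i)
    (hL_inj : ∀ (a : A) (x y : ↥(L.obj a)),
      (∀ i : I, (π i).app a x = (π i).app a y) → x = y)
    (hL_surj : ∀ (a : A) (s : ∀ i : I, ↥((M i).obj a)),
      (∀ {i j : I} (hij : i ≤ j), (γ hij).app a (s j) = s i) →
        ∃ x : ↥(L.obj a), ∀ i : I, (π i).app a x = s i) :
    -- then F_λ L, with the projections F_λ π_i, is the inverse limit of (F_λ M_i):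
    ∀ b : B,
      (∀ x y : FlObj F L b,
        (∀ i : I, FlHom F (π i) b x = FlHom F (π i) b y) → x = y) ∧
      (∀ s : ∀ i : I, FlObj F (M i) b,
        (∀ {i j : I} (hij : i ≤ j), FlHom F (γ hij) b (s j) = s i) →
          ∃ x : FlObj F L b, ∀ i : I, FlHom F (π i) b x = s i) :=
  stmt_6_general F M γ hsupp L π hL_inj hL_surj
end

section
/- Let ((X_i)_{i∈ℕ}, (γ_{ji}: X_j → X_i)_{j≥i}) be an inverse system of non-empty sets satisfying the Mittag-Leffler condition: for all i there exists j ≥ i such that γ_{ki}(X_k) = γ_{ji}(X_j) for all k ≥ j. Then the inverse limit lim← X_i is non-empty. -/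
/-!
Restricting each `X i` to its eventual range `⋂_{k ≥ i} γ_{ki}(X k)` gives, by the Mittag-Leffler
condition, an inverse system of non-empty sets whose transition maps are surjective, and along `ℕ`
a compatible sequence in such a system is built by lifting one step at a time.
-/

open CategoryTheory Opposite

section

variable {ι : Type*} [Preorder ι] (X : ι → Type*) (γ : ∀ {i j : ι}, i ≤ j → X j → X i)
  (hid : ∀ (i : ι) (x : X i), γ (le_refl i) x = x)
  (hcomp : ∀ {i j l : ι} (hij : i ≤ j) (hjl : j ≤ l) (x : X l),
    γ hij (γ hjl x) = γ (hij.trans hjl) x)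

def inverseSystemFunctor : ιᵒᵖ ⥤ Type _ where
  obj n := X n.unop
  map f := ↾(γ (leOfHom f.unop))
  map_id n := by ext x; exact hid _ x
  map_comp f g := by ext x; exact (hcomp _ _ x).symm

theorem inverseSystemFunctor_isMittagLeffler [IsDirectedOrder ι]
    (hML : ∀ i : ι, ∃ (j : ι) (hij : i ≤ j), ∀ (l : ι) (hjl : j ≤ l),
      Set.range (fun x : X l => γ (hij.trans hjl) x) = Set.range (fun x : X j => γ hij x)) :
    (inverseSystemFunctor X γ hid hcomp).IsMittagLeffler := by
  intro ⟨i⟩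
  obtain ⟨j, hij, hstab⟩ := hML i
  refine ⟨op j, (homOfLE hij).op, fun ⟨k⟩ g => ?_⟩
  have hik : i ≤ k := leOfHom g.unop
  change Set.range (γ hij) ⊆ Set.range (γ hik)
  obtain ⟨l, hjl, hkl⟩ := exists_ge_ge j k
  rw [← hstab l hjl]
  rintro _ ⟨x, rfl⟩
  exact ⟨γ hkl x, hcomp _ _ x⟩

end

namespace CategoryTheory.Functor

theorem nonempty_sections_of_surjective_nat {F : ℕᵒᵖ ⥤ Type*} [∀ n, Nonempty (F.obj n)]
    (hF : ∀ n, Function.Surjective (F.map (homOfLE (Nat.le_succ n)).op)) : F.sections.Nonempty := by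
  obtain ⟨s, -⟩ := Limits.Types.surjective_π_app_zero_of_surjective_map
    (Limits.Types.limitConeIsLimit F) hF (Classical.arbitrary (F.obj (op 0)))
  exact ⟨s.1, s.2⟩

theorem IsMittagLeffler.nonempty_sections_of_nat {F : ℕᵒᵖ ⥤ Type*}
    [∀ n, Nonempty (F.obj n)] (h : F.IsMittagLeffler) : F.sections.Nonempty := by
  have := F.toEventualRanges_nonempty h
  obtain ⟨s, hs⟩ := nonempty_sections_of_surjective_nat
    (fun n => F.surjective_toEventualRanges h (homOfLE (Nat.le_succ n)).op)
  exact ⟨_, (F.toEventualRangesSectionsEquiv ⟨s, hs⟩).2⟩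

end CategoryTheory.Functor

/-- An inverse system `((X_i)_{i∈ℕ}, γ_{ji} : X_j → X_i)` of non-empty
sets satisfying the Mittag-Leffler condition (for every `i` there is `j ≥ i` such that
`γ_{ki}(X_k) = γ_{ji}(X_j)` for all `k ≥ j`) has non-empty inverse limit: there is a
compatible sequence `(x_i)` with `γ_{ji}(x_j) = x_i` for all `j ≥ i`. -/
theorem stmt_12 (X : ℕ → Type) (γ : ∀ {i j : ℕ}, i ≤ j → X j → X i)
    (hne : ∀ i, Nonempty (X i))
    (hid : ∀ (i : ℕ) (x : X i), γ (le_refl i) x = x)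
    (hcomp : ∀ {i j l : ℕ} (hij : i ≤ j) (hjl : j ≤ l) (x : X l),
      γ hij (γ hjl x) = γ (hij.trans hjl) x)
    (hML : ∀ i : ℕ, ∃ (j : ℕ) (hij : i ≤ j),
      ∀ (l : ℕ) (hjl : j ≤ l),
        Set.range (fun x : X l => γ (hij.trans hjl) x) =
          Set.range (fun x : X j => γ hij x)) :
    ∃ s : ∀ i, X i, ∀ (i j : ℕ) (hij : i ≤ j), γ hij (s j) = s i := by
  have : ∀ n, Nonempty ((inverseSystemFunctor X γ hid hcomp).obj n) := fun n => hne n.unop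
  obtain ⟨s, hs⟩ := Functor.IsMittagLeffler.nonempty_sections_of_nat
    (inverseSystemFunctor_isMittagLeffler X γ hid hcomp hML)
  exact ⟨fun i => s (op i), fun i j hij => hs (homOfLE hij).op⟩
end

section
/- Let R be a finite-dimensional k-algebra, ((M_i)_{i∈ℕ}, (γ_{ji}: M_j → M_i)_{j≥i}) an inverse system of finite-dimensional right R-modules, and X a finitely presented left R-module. Then the canonical map (lim← M_i) ⊗_R X → lim← (M_i ⊗_R X) is an isomorphism. -/
open MulOpposite

/-- `t : M → X → T` is a tensor product (universal balanced product) of the right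
`R`-module `M` and the left `R`-module `X` over `R`: it is biadditive, `R`-balanced,
and universal among such maps. -/
structure IsTensorProductOver (R : Type) [Ring R] (M X T : Type)
    [AddCommGroup M] [Module Rᵐᵒᵖ M] [AddCommGroup X] [Module R X] [AddCommGroup T]
    (t : M → X → T) : Prop where
  add_left : ∀ (m m' : M) (x : X), t (m + m') x = t m x + t m' x
  add_right : ∀ (m : M) (x x' : X), t m (x + x') = t m x + t m x'
  balanced : ∀ (m : M) (r : R) (x : X), t (op r • m) x = t m (r • x)
  universal : ∀ (C : Type) [AddCommGroup C] (c : M → X → C),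
    (∀ (m m' : M) (x : X), c (m + m') x = c m x + c m' x) →
    (∀ (m : M) (x x' : X), c m (x + x') = c m x + c m x') →
    (∀ (m : M) (r : R) (x : X), c (op r • m) x = c m (r • x)) →
    ∃! φ : T →+ C, ∀ (m : M) (x : X), φ (t m x) = c m x

/-!
Fix a presentation `R^m --g--> R^n --f--> X → 0`. Since `- ⊗_R X` is right exact, for every right
module `M` the group `M ⊗_R X` is the cokernel of `M ⊗ g : M^m → M^n`; this applies to each `M_i`
and to `L = lim M_i`, and `L^d = lim M_i^d`. Both halves of the claim then amount to lifting
compatible families along the maps `M_i^n → M_i ⊗ X` and `M_i ⊗ g`, whose kernels are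
`k`-subspaces of finite-dimensional spaces. The fibres are cosets of these kernels; their images
in a fixed `M_i^d` form descending chains of cosets of subspaces, which stabilize, and the
Mittag-Leffler argument then produces a compatible family of points in them.
-/

open Function Set
open scoped Pointwise

namespace InverseSystem

variable {N : ℕ → Type*} {g : ∀ ⦃i j : ℕ⦄, i ≤ j → N j → N i} [InverseSystem g]

theorem map_eq_of_map_succ_eq {s : ∀ i, N i} (hs : ∀ i, g (Nat.le_succ i) (s (i + 1)) = s i)
    ⦃i j : ℕ⦄ (h : i ≤ j) : g h (s j) = s i := by
  induction h with
  | refl => exact map_self _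
  | @step j h ih => rw [← map_map (f := g) h (Nat.le_succ j), hs, ih]

theorem exists_compatible_of_forall_exists_succ (E : ∀ i, Set (N i)) (h0 : (E 0).Nonempty)
    (hE : ∀ i, ∀ x ∈ E i, ∃ y ∈ E (i + 1), g (Nat.le_succ i) y = x) :
    ∃ s : ∀ i, N i, (∀ ⦃i j⦄ (h : i ≤ j), g h (s j) = s i) ∧ ∀ i, s i ∈ E i := by
  have step : ∀ i (x : E i), ∃ y : E (i + 1), g (Nat.le_succ i) y = x := fun i x ↦
    let ⟨y, hy, hyx⟩ := hE i x x.2; ⟨⟨y, hy⟩, hyx⟩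
  choose next hnext using step
  let s : ∀ i, E i := fun i ↦ Nat.rec (motive := fun i ↦ E i) ⟨h0.some, h0.some_mem⟩ next i
  exact ⟨fun i ↦ s i, map_eq_of_map_succ_eq fun i ↦ hnext i (s i), fun i ↦ (s i).2⟩

theorem exists_compatible_of_image_stabilizes (S : ∀ i, Set (N i)) (hS : ∀ i, (S i).Nonempty)
    (hmaps : ∀ ⦃i j⦄ (h : i ≤ j), MapsTo (g h) (S j) (S i))
    (hstab : ∀ i, ∃ j₀, ∃ h₀ : i ≤ j₀, ∀ j (h : i ≤ j), j₀ ≤ j → g h '' S j = g h₀ '' S j₀) :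
    ∃ s : ∀ i, N i, (∀ ⦃i j⦄ (h : i ≤ j), g h (s j) = s i) ∧ ∀ i, s i ∈ S i := by
  choose j₀ h₀ hj₀ using hstab
  have hstep : ∀ i, ∀ x ∈ g (h₀ i) '' S (j₀ i),
      ∃ y ∈ g (h₀ (i + 1)) '' S (j₀ (i + 1)), g (Nat.le_succ i) y = x := by
    intro i x hx
    set J := max (j₀ i) (j₀ (i + 1))
    have hiJ : i + 1 ≤ J := (h₀ (i + 1)).trans (le_max_right _ _)
    rw [← hj₀ i J (Nat.le_of_succ_le hiJ) (le_max_left _ _)] at hx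
    obtain ⟨z, hz, rfl⟩ := hx
    refine ⟨g hiJ z, ?_, map_map _ _ _⟩
    rw [← hj₀ (i + 1) J hiJ (le_max_right _ _)]
    exact mem_image_of_mem _ hz
  obtain ⟨s, hs, hsE⟩ := exists_compatible_of_forall_exists_succ _ ((hS (j₀ 0)).image _) hstep
  exact ⟨s, hs, fun i ↦ hmaps (h₀ i) |>.image_subset (hsE i)⟩

end InverseSystem

section LinearInverseSystem

variable {k : Type*} [Field k] {N : ℕ → Type*} [∀ i, AddCommGroup (N i)] [∀ i, Module k (N i)]
  [∀ i, FiniteDimensional k (N i)] (g : ∀ ⦃i j : ℕ⦄, i ≤ j → N j →ₗ[k] N i)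
  [InverseSystem fun _ _ h ↦ g h] (V : ∀ i, Submodule k (N i))
  (hV : ∀ ⦃i j⦄ (h : i ≤ j), (V j).map (g h) ≤ V i)
include hV

theorem exists_map_stabilizes (i : ℕ) :
    ∃ j₀, ∃ h₀ : i ≤ j₀, ∀ j (h : i ≤ j), j₀ ≤ j → (V j).map (g h) = (V j₀).map (g h₀) := by
  obtain ⟨_, ⟨⟨j₀, h₀⟩, rfl⟩, hmin⟩ := wellFounded_lt.has_min
    (range fun j : {j // i ≤ j} ↦ (V j).map (g j.2)) ⟨_, ⟨⟨i, le_rfl⟩, rfl⟩⟩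
  refine ⟨j₀, h₀, fun j h hj ↦ eq_of_le_of_not_lt ?_ (hmin _ ⟨⟨j, h⟩, rfl⟩)⟩
  rintro _ ⟨v, hv, rfl⟩
  exact ⟨g hj v, hV hj ⟨v, hv, rfl⟩, InverseSystem.map_map (f := fun _ _ h ↦ g h) h₀ hj v⟩

theorem exists_compatible_sub_mem (a : ∀ i, N i) (ha : ∀ ⦃i j⦄ (h : i ≤ j), g h (a j) - a i ∈ V i) :
    ∃ s : ∀ i, N i, (∀ ⦃i j⦄ (h : i ≤ j), g h (s j) = s i) ∧ ∀ i, s i - a i ∈ V i := by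
  have mem_coset {i} {x : N i} {b : N i} {W : Submodule k (N i)} :
      x ∈ b +ᵥ (W : Set (N i)) ↔ x - b ∈ W := by
    rw [mem_leftAddCoset_iff, neg_add_eq_sub]; rfl
  have image_coset {i j} (h : i ≤ j) : g h '' (a j +ᵥ (V j : Set (N j))) =
      g h (a j) +ᵥ ((V j).map (g h) : Set (N i)) := by
    rw [image_vadd_distrib, Submodule.map_coe]
  have hmaps : ∀ ⦃i j⦄ (h : i ≤ j),
      MapsTo (g h) (a j +ᵥ (V j : Set (N j))) (a i +ᵥ (V i : Set (N i))) := by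
    intro i j h x hx
    rw [mem_coset] at hx ⊢
    simpa [sub_add_sub_cancel] using (V i).add_mem (hV h ⟨_, hx, rfl⟩) (ha h)
  -- the images are cosets of the stabilizing `(V j).map (g h)`, through points congruent by `ha`
  have hstab : ∀ i, ∃ j₀, ∃ h₀ : i ≤ j₀, ∀ j (h : i ≤ j), j₀ ≤ j →
      g h '' (a j +ᵥ (V j : Set (N j))) = g h₀ '' (a j₀ +ᵥ (V j₀ : Set (N j₀))) := by
    intro i
    obtain ⟨j₀, h₀, hj₀⟩ := exists_map_stabilizes g V hV i
    refine ⟨j₀, h₀, fun j h hj ↦ ?_⟩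
    have hcomp : g h (a j) = g h₀ (g hj (a j)) :=
      (InverseSystem.map_map (f := fun _ _ h ↦ g h) h₀ hj (a j)).symm
    rw [image_coset, image_coset, hj₀ j h hj]
    refine (leftAddCoset_eq_iff ((V j₀).map (g h₀)).toAddSubgroup).2 ?_
    rw [neg_add_eq_sub, hcomp, ← map_sub]
    exact ⟨_, by simpa [neg_sub] using (V j₀).neg_mem (ha hj), rfl⟩
  obtain ⟨s, hs, hsS⟩ := InverseSystem.exists_compatible_of_image_stabilizes
    (g := fun _ _ h ↦ g h) _ (fun i ↦ ⟨a i, mem_coset.2 (by simp)⟩) hmaps hstab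
  exact ⟨s, hs, fun i ↦ mem_coset.1 (hsS i)⟩

end LinearInverseSystem

theorem exists_compatible_lift {k : Type*} [Field k] {A T : ℕ → Type*}
    [∀ i, AddCommGroup (A i)] [∀ i, Module k (A i)] [∀ i, FiniteDimensional k (A i)]
    [∀ i, AddCommGroup (T i)]
    (gA : ∀ ⦃i j : ℕ⦄, i ≤ j → A j →ₗ[k] A i) [hgA : InverseSystem fun _ _ h ↦ gA h]
    (gT : ∀ ⦃i j : ℕ⦄, i ≤ j → T j →+ T i) (Φ : ∀ i, A i →+ T i)
    (hΦ : ∀ ⦃i j⦄ (h : i ≤ j) x, Φ i (gA h x) = gT h (Φ j x))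
    (K : ∀ i, Submodule k (A i)) (hK : ∀ i x, Φ i x = 0 ↔ x ∈ K i)
    (s : ∀ i, T i) (hs : ∀ ⦃i j⦄ (h : i ≤ j), gT h (s j) = s i)
    (hsΦ : ∀ i, s i ∈ range (Φ i)) :
    ∃ a : ∀ i, A i, (∀ ⦃i j⦄ (h : i ≤ j), gA h (a j) = a i) ∧ ∀ i, Φ i (a i) = s i := by
  choose a₀ ha₀ using hsΦ
  have hKmap : ∀ ⦃i j⦄ (h : i ≤ j), (K j).map (gA h) ≤ K i := by
    rintro i j h _ ⟨x, hx, rfl⟩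
    rw [SetLike.mem_coe, ← hK] at hx
    rw [← hK, hΦ, hx, map_zero]
  have ha₀K : ∀ ⦃i j⦄ (h : i ≤ j), gA h (a₀ j) - a₀ i ∈ K i := fun i j h ↦ by
    rw [← hK, map_sub, hΦ, ha₀, ha₀, hs, sub_self]
  obtain ⟨a, ha, haK⟩ := exists_compatible_sub_mem gA K hKmap a₀ ha₀K
  refine ⟨a, ha, fun i ↦ ?_⟩
  rw [← ha₀, ← sub_eq_zero, ← map_sub, hK]
  exact haK i

section TensorPi

variable {R : Type} [Ring R] {M : Type} [AddCommGroup M] [Module Rᵐᵒᵖ M] {ι κ : Type*}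

/-- The element `m ⊗ r` of `M ⊗_R R^ι`, under the identification `M ⊗_R R^ι = M^ι`. -/
def tmulPi : M →+ (ι → R) →+ (ι → M) :=
  AddMonoidHom.mk' (fun m ↦ AddMonoidHom.mk' (fun r j ↦ op (r j) • m) fun r r' ↦ by
    ext; simp [add_smul]) fun m m' ↦ by ext; simp

@[simp]
theorem tmulPi_apply (m : M) (r : ι → R) (j : ι) : tmulPi m r j = op (r j) • m := rfl

theorem tmulPi_op_smul (a : R) (m : M) (r : ι → R) : tmulPi (op a • m) r = tmulPi m (a • r) := by
  ext; simp [mul_smul]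

theorem sum_tmulPi_single [Fintype ι] [DecidableEq ι] (b : ι → M) :
    ∑ j, tmulPi (b j) (Pi.single j (1 : R)) = b := by
  ext j; simp [Pi.single_apply, apply_ite op]

variable [Fintype κ] [DecidableEq κ]

/-- The map `M ⊗_R g : M^κ → M^ι`. -/
def LinearMap.lTensorPi (g : (κ → R) →ₗ[R] (ι → R)) : (κ → M) →+ (ι → M) :=
  AddMonoidHom.mk' (fun c ↦ ∑ p, tmulPi (c p) (g (Pi.single p 1))) fun c c' ↦ by
    simp [Finset.sum_add_distrib]

variable (g : (κ → R) →ₗ[R] (ι → R))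

theorem LinearMap.lTensorPi_apply (c : κ → M) :
    g.lTensorPi c = ∑ p, tmulPi (c p) (g (Pi.single p 1)) := rfl

theorem LinearMap.lTensorPi_tmulPi (m : M) (c : κ → R) :
    g.lTensorPi (tmulPi m c) = tmulPi m (g c) := by
  conv_rhs => rw [pi_eq_sum_univ' c]
  simp [lTensorPi_apply, tmulPi_op_smul]

theorem LinearMap.lTensorPi_comp {M' : Type} [AddCommGroup M'] [Module Rᵐᵒᵖ M']
    (φ : M →ₗ[Rᵐᵒᵖ] M') (c : κ → M) : g.lTensorPi (φ ∘ c) = φ ∘ g.lTensorPi c := by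
  ext j; simp [lTensorPi_apply]

theorem LinearMap.lTensorPi_smul {S : Type*} [Monoid S] [DistribMulAction S M]
    [SMulCommClass S Rᵐᵒᵖ M] (a : S) (c : κ → M) : g.lTensorPi (a • c) = a • g.lTensorPi c := by
  ext j; simp [lTensorPi_apply, Finset.smul_sum, smul_comm a]

end TensorPi

namespace IsTensorProductOver

variable {R : Type} [Ring R] {M X T : Type} [AddCommGroup M] [Module Rᵐᵒᵖ M] [AddCommGroup X]
  [Module R X] [AddCommGroup T] {t : M → X → T} (h : IsTensorProductOver R M X T t)
  {ι κ : Type} [Fintype ι] [DecidableEq ι] [Fintype κ] [DecidableEq κ]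
  (f : (ι → R) →ₗ[R] X)
include h

theorem hom_ext {C : Type} [AddCommGroup C] {φ₁ φ₂ : T →+ C}
    (he : ∀ m x, φ₁ (t m x) = φ₂ (t m x)) : φ₁ = φ₂ :=
  (h.universal C (fun m x ↦ φ₁ (t m x)) (fun m m' x ↦ by rw [h.add_left, map_add])
    (fun m x x' ↦ by rw [h.add_right, map_add]) (fun m r x ↦ by rw [h.balanced])).unique
    (fun _ _ ↦ rfl) fun m x ↦ (he m x).symm

theorem eq_top_of_forall_mem (H : AddSubgroup T) (hH : ∀ m x, t m x ∈ H) : H = ⊤ := by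
  obtain ⟨φ, hφ, -⟩ := h.universal H (fun m x ↦ ⟨t m x, hH m x⟩)
    (fun m m' x ↦ Subtype.ext (h.add_left m m' x)) (fun m x x' ↦ Subtype.ext (h.add_right m x x'))
    (fun m r x ↦ Subtype.ext (h.balanced m r x))
  have hφ_id : H.subtype.comp φ = AddMonoidHom.id T := h.hom_ext fun m x ↦ by simp [hφ]
  refine eq_top_iff.2 fun z _ ↦ ?_
  rw [← AddMonoidHom.id_apply T z, ← hφ_id]
  exact (φ z).2

/-- The map `M^ι = M ⊗_R R^ι → T` induced by `f`. -/
def ofPi : (ι → M) →+ T :=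
  AddMonoidHom.mk' (fun b ↦ ∑ j, t (b j) (f (Pi.single j 1))) fun b b' ↦ by
    simp [h.add_left, Finset.sum_add_distrib]

theorem ofPi_apply (b : ι → M) : h.ofPi f b = ∑ j, t (b j) (f (Pi.single j 1)) := rfl

theorem ofPi_tmulPi (m : M) (r : ι → R) : h.ofPi f (tmulPi m r) = t m (f r) := by
  let tm : X →+ T := AddMonoidHom.mk' (t m) (h.add_right m)
  have hfr : f r = ∑ j, r j • f (Pi.single j 1) := by
    conv_lhs => rw [pi_eq_sum_univ' r]
    simp
  rw [ofPi_apply, hfr, show t m _ = tm _ from rfl, map_sum]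
  exact Finset.sum_congr rfl fun j _ ↦ h.balanced m (r j) _

theorem ofPi_surjective (hf : Surjective f) : Surjective (h.ofPi f) := by
  rw [← AddMonoidHom.range_eq_top]
  refine h.eq_top_of_forall_mem _ fun m x ↦ ?_
  obtain ⟨r, rfl⟩ := hf x
  exact ⟨tmulPi m r, h.ofPi_tmulPi f m r⟩

theorem ofPi_lTensorPi {g : (κ → R) →ₗ[R] (ι → R)} (hfg : ∀ c, f (g c) = 0) (c : κ → M) :
    h.ofPi f (g.lTensorPi c) = 0 := by
  have t_zero : ∀ m, t m 0 = 0 := fun m ↦ (AddMonoidHom.mk' (t m) (h.add_right m)).map_zero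
  simp [LinearMap.lTensorPi_apply, ofPi_tmulPi, hfg, t_zero]

theorem exists_comp_ofPi_eq_mk (hf : Surjective f) {g : (κ → R) →ₗ[R] (ι → R)} (hfg : Exact g f) :
    ∃ θ : T →+ (ι → M) ⧸ (g.lTensorPi (M := M)).range,
      ∀ b, θ (h.ofPi f b) = QuotientAddGroup.mk b := by
  set mk := QuotientAddGroup.mk' (g.lTensorPi (M := M)).range
  have mk_tmulPi_eq : ∀ m {r r'}, f r = f r' → mk (tmulPi m r) = mk (tmulPi m r') := by
    intro m r r' hrr'
    obtain ⟨c, hc⟩ := (hfg (r - r')).1 (by rw [map_sub, hrr', sub_self])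
    refine (QuotientAddGroup.mk'_eq_mk' _).2 ⟨g.lTensorPi (tmulPi m (-c)), ⟨_, rfl⟩, ?_⟩
    rw [LinearMap.lTensorPi_tmulPi, map_neg, hc, neg_sub, map_sub, add_sub_cancel]
  let σ := surjInv hf
  have hσ : ∀ x, f (σ x) = x := surjInv_eq hf
  obtain ⟨θ, hθ, -⟩ := h.universal _ (fun m x ↦ mk (tmulPi m (σ x))) (fun m m' x ↦ by simp)
    (fun m x x' ↦ by rw [← map_add, ← map_add]; exact mk_tmulPi_eq m (by simp [hσ]))
    (fun m a x ↦ by rw [tmulPi_op_smul]; exact mk_tmulPi_eq m (by simp [hσ]))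
  refine ⟨θ, fun b ↦ ?_⟩
  calc θ (h.ofPi f b) = ∑ j, mk (tmulPi (b j) (Pi.single j (1 : R))) := by
        simp only [ofPi_apply, map_sum, hθ]
        exact Finset.sum_congr rfl fun j _ ↦ mk_tmulPi_eq _ (hσ _)
    _ = mk b := by rw [← map_sum, sum_tmulPi_single]

theorem ofPi_eq_zero_iff (hf : Surjective f) {g : (κ → R) →ₗ[R] (ι → R)} (hfg : Exact g f)
    {b : ι → M} : h.ofPi f b = 0 ↔ b ∈ (g.lTensorPi (M := M)).range := by
  refine ⟨fun hb ↦ ?_, ?_⟩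
  · obtain ⟨θ, hθ⟩ := h.exists_comp_ofPi_eq_mk f hf hfg
    rw [← QuotientAddGroup.eq_zero_iff, ← hθ, hb, map_zero]
  · rintro ⟨c, rfl⟩
    exact h.ofPi_lTensorPi f hfg.apply_apply_eq_zero c

theorem map_ofPi {M' T' : Type} [AddCommGroup M'] [Module Rᵐᵒᵖ M'] [AddCommGroup T']
    {t' : M' → X → T'} (h' : IsTensorProductOver R M' X T' t') (φ : T →+ T') (π : M → M')
    (hφ : ∀ m x, φ (t m x) = t' (π m) x) (b : ι → M) :
    φ (h.ofPi f b) = h'.ofPi f (π ∘ b) := by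
  simp [ofPi_apply, hφ]

end IsTensorProductOver

theorem stmt_14_general (k : Type) [Field k] (R : Type) [Ring R] [Algebra k R]
    -- the inverse system of finite-dimensional right R-modules
    (M : ℕ → Type) [∀ i, AddCommGroup (M i)] [∀ i, Module Rᵐᵒᵖ (M i)]
    [∀ i, Module k (M i)] [∀ i, IsScalarTower k Rᵐᵒᵖ (M i)]
    [∀ i, FiniteDimensional k (M i)]
    (γ : ∀ {i j : ℕ}, i ≤ j → M j →ₗ[Rᵐᵒᵖ] M i)
    (hγ_id : ∀ (i : ℕ) (m : M i), γ (le_refl i) m = m)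
    (hγ_comp : ∀ {i j l : ℕ} (hij : i ≤ j) (hjl : j ≤ l) (m : M l),
      γ hij (γ hjl m) = γ (hij.trans hjl) m)
    -- X is a finitely presented left R-module
    (X : Type) [AddCommGroup X] [Module R X] [Module.FinitePresentation R X]
    -- L is the inverse limit of the system (M_i)
    (L : Type) [AddCommGroup L] [Module Rᵐᵒᵖ L] (π : ∀ i : ℕ, L →ₗ[Rᵐᵒᵖ] M i)
    (hπ : ∀ {i j : ℕ} (hij : i ≤ j) (u : L), γ hij (π j u) = π i u)
    (hL_inj : ∀ u v : L, (∀ i, π i u = π i v) → u = v)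
    (hL_surj : ∀ s : ∀ i, M i, (∀ {i j : ℕ} (hij : i ≤ j), γ hij (s j) = s i) →
      ∃ u : L, ∀ i, π i u = s i)
    -- T i is the tensor product M i ⊗_R X, and TL is L ⊗_R X
    (T : ℕ → Type) [∀ i, AddCommGroup (T i)] (t : ∀ i, M i → X → T i)
    (ht : ∀ i, IsTensorProductOver R (M i) X (T i) (t i))
    (TL : Type) [AddCommGroup TL] (tL : L → X → TL)
    (htL : IsTensorProductOver R L X TL tL)
    -- the maps induced by γ and π on the tensor products
    (δ : ∀ {i j : ℕ}, i ≤ j → T j →+ T i)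
    (hδ : ∀ {i j : ℕ} (hij : i ≤ j) (m : M j) (x : X),
      δ hij (t j m x) = t i (γ hij m) x)
    (ψ : ∀ i : ℕ, TL →+ T i)
    (hψ : ∀ (i : ℕ) (u : L) (x : X), ψ i (tL u x) = t i (π i u) x) :
    -- then the canonical map (lim← M_i) ⊗ X → lim← (M_i ⊗ X) is bijective:
    (∀ u v : TL, (∀ i, ψ i u = ψ i v) → u = v) ∧
    (∀ s : ∀ i, T i, (∀ {i j : ℕ} (hij : i ≤ j), δ hij (s j) = s i) →
      ∃ u : TL, ∀ i, ψ i u = s i) := by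
  obtain ⟨n, m, f, g, hf, hfg⟩ := Module.FinitePresentation.exists_fin' R X
  let γpow (d : ℕ) : ∀ ⦃i j : ℕ⦄, i ≤ j → (Fin d → M j) →ₗ[k] (Fin d → M i) :=
    fun _ _ h ↦ ((γ h).restrictScalars k).compLeft (Fin d)
  have γpow_inverseSystem (d : ℕ) : InverseSystem fun _ _ h ↦ γpow d h :=
    ⟨fun i x ↦ funext fun p ↦ hγ_id i (x p),
      fun _ _ _ h₁ h₂ x ↦ funext fun p ↦ hγ_comp h₁ h₂ (x p)⟩
  let Λ (i : ℕ) : (Fin m → M i) →ₗ[k] (Fin n → M i) :=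
    { toAddHom := g.lTensorPi.toAddHom, map_smul' := g.lTensorPi_smul }
  have hΛ : ∀ ⦃i j⦄ (h : i ≤ j) c, Λ i (γpow m h c) = γpow n h (Λ j c) :=
    fun _ _ h c ↦ g.lTensorPi_comp (γ h) c
  have hψΦ : ∀ i e, ψ i (htL.ofPi f e) = (ht i).ofPi f (π i ∘ e) :=
    fun i ↦ htL.map_ofPi f (ht i) (ψ i) (π i) (hψ i)
  have hδΦ : ∀ ⦃i j⦄ (h : i ≤ j) b, (ht i).ofPi f (γpow n h b) = δ h ((ht j).ofPi f b) :=
    fun _ _ h b ↦ ((ht _).map_ofPi f (ht _) (δ h) (γ h) (hδ h) b).symm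
  have lift : ∀ {d} (a : ∀ i, Fin d → M i), (∀ ⦃i j⦄ (h : i ≤ j), γpow d h (a j) = a i) →
      ∃ e : Fin d → L, ∀ i, π i ∘ e = a i := by
    intro d a ha
    choose e he using fun p ↦ hL_surj (fun i ↦ a i p) fun h ↦ congrFun (ha h) p
    exact ⟨e, fun i ↦ funext fun p ↦ he p i⟩
  refine ⟨fun u v huv ↦ ?_, fun s hs ↦ ?_⟩
  · obtain ⟨e, he⟩ := htL.ofPi_surjective f hf (u - v)
    obtain ⟨c, hc, hΛc⟩ := exists_compatible_lift (hgA := γpow_inverseSystem m) (γpow m)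
      (fun _ _ h ↦ (γpow n h).toAddMonoidHom) (fun i ↦ (Λ i).toAddMonoidHom) hΛ
      (fun i ↦ LinearMap.ker (Λ i)) (fun _ _ ↦ Iff.rfl) (fun i ↦ π i ∘ e)
      (fun _ _ h ↦ funext fun p ↦ hπ h (e p))
      (fun i ↦ ((ht i).ofPi_eq_zero_iff f hf hfg).1 (by rw [← hψΦ, he, map_sub, huv, sub_self]))
    obtain ⟨c', hc'⟩ := lift c hc
    have hc'e : g.lTensorPi c' = e := funext fun p ↦ hL_inj _ _ fun i ↦ by
      have hcomp := congrFun (g.lTensorPi_comp (π i) c') p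
      rw [hc' i] at hcomp
      exact hcomp.symm.trans (congrFun (hΛc i) p)
    rw [← sub_eq_zero, ← he, ← hc'e, htL.ofPi_lTensorPi f hfg.apply_apply_eq_zero]
  · obtain ⟨b, hb, hΦb⟩ := exists_compatible_lift (hgA := γpow_inverseSystem n) (γpow n)
      (fun _ _ h ↦ δ h) (fun i ↦ (ht i).ofPi f) hδΦ (fun i ↦ LinearMap.range (Λ i))
      (fun i _ ↦ (ht i).ofPi_eq_zero_iff f hf hfg) s (fun _ _ h ↦ hs h)
      (fun i ↦ (ht i).ofPi_surjective f hf (s i))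
    obtain ⟨e, he⟩ := lift b hb
    exact ⟨htL.ofPi f e, fun i ↦ by rw [hψΦ, he, hΦb]⟩

/-- Let `R` be a finite-dimensional `k`-algebra,
`((M_i)_{i∈ℕ}, γ_{ji})` an inverse system of finite-dimensional right `R`-modules with
inverse limit `L` (with projections `π_i`, computed as compatible sequences), and `X` a
finitely presented left `R`-module.  Then the canonical map
`(lim← M_i) ⊗_R X → lim← (M_i ⊗_R X)` is an isomorphism.  (Tensor products are encoded
by their universal property; the canonical map is encoded by the induced maps `ψ_i`.) -/
theorem stmt_14 (k : Type) [Field k] (R : Type) [Ring R] [Algebra k R]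
    [FiniteDimensional k R]
    -- the inverse system of finite-dimensional right R-modules
    (M : ℕ → Type) [∀ i, AddCommGroup (M i)] [∀ i, Module Rᵐᵒᵖ (M i)]
    [∀ i, Module k (M i)] [∀ i, IsScalarTower k Rᵐᵒᵖ (M i)]
    [∀ i, FiniteDimensional k (M i)]
    (γ : ∀ {i j : ℕ}, i ≤ j → M j →ₗ[Rᵐᵒᵖ] M i)
    (hγ_id : ∀ (i : ℕ) (m : M i), γ (le_refl i) m = m)
    (hγ_comp : ∀ {i j l : ℕ} (hij : i ≤ j) (hjl : j ≤ l) (m : M l),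
      γ hij (γ hjl m) = γ (hij.trans hjl) m)
    -- X is a finitely presented left R-module
    (X : Type) [AddCommGroup X] [Module R X] [Module.FinitePresentation R X]
    -- L is the inverse limit of the system (M_i)
    (L : Type) [AddCommGroup L] [Module Rᵐᵒᵖ L] (π : ∀ i : ℕ, L →ₗ[Rᵐᵒᵖ] M i)
    (hπ : ∀ {i j : ℕ} (hij : i ≤ j) (u : L), γ hij (π j u) = π i u)
    (hL_inj : ∀ u v : L, (∀ i, π i u = π i v) → u = v)
    (hL_surj : ∀ s : ∀ i, M i, (∀ {i j : ℕ} (hij : i ≤ j), γ hij (s j) = s i) →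
      ∃ u : L, ∀ i, π i u = s i)
    -- T i is the tensor product M i ⊗_R X, and TL is L ⊗_R X
    (T : ℕ → Type) [∀ i, AddCommGroup (T i)] (t : ∀ i, M i → X → T i)
    (ht : ∀ i, IsTensorProductOver R (M i) X (T i) (t i))
    (TL : Type) [AddCommGroup TL] (tL : L → X → TL)
    (htL : IsTensorProductOver R L X TL tL)
    -- the maps induced by γ and π on the tensor products
    (δ : ∀ {i j : ℕ}, i ≤ j → T j →+ T i)
    (hδ : ∀ {i j : ℕ} (hij : i ≤ j) (m : M j) (x : X),
      δ hij (t j m x) = t i (γ hij m) x)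
    (ψ : ∀ i : ℕ, TL →+ T i)
    (hψ : ∀ (i : ℕ) (u : L) (x : X), ψ i (tL u x) = t i (π i u) x) :
    -- then the canonical map (lim← M_i) ⊗ X → lim← (M_i ⊗ X) is bijective:
    (∀ u v : TL, (∀ i, ψ i u = ψ i v) → u = v) ∧
    (∀ s : ∀ i, T i, (∀ {i j : ℕ} (hij : i ≤ j), δ hij (s j) = s i) →
      ∃ u : TL, ∀ i, ψ i u = s i) :=
  stmt_14_general k R M γ hγ_id hγ_comp X L π hπ hL_inj hL_surj T t ht TL tL htL δ hδ ψ hψ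
end
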